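/- Let A be a real symmetric n×n matrix and v ∈ ℝⁿ nonzero. If v is an eigenvector of some A_{N₁} := A - (2/N₁) v vᵀ corresponding to its smallest eigenvalue (N₁ > 0), then for every N ∈ (0, N₁], v is an eigenvector of A_N := A - (2/N) v vᵀ corresponding to its smallest eigenvalue. -/

import Mathlib

/-!
Write `A_N = A_{N₁} - c • v vᵀ` with `c = 2/N - 2/N₁ ≥ 0`. Then `v` is still an eigenvector,
with eigenvalue `λ - c (v ⬝ᵥ v)` where `λ = lamMin A_{N₁}`, and for every unit vector `w` Cauchy–Schwarz gives
`wᵀ A_N w = wᵀ A_{N₁} w - c (v ⬝ᵥ w)² ≥ λ - c (v ⬝ᵥ v)`, so this eigenvalue is the minimum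
of the Rayleigh quotient.
-/

open Matrix

noncomputable def lamMin {ι : Type} [Fintype ι] (M : Matrix ι ι ℝ) : ℝ :=
  ⨅ v : {v : ι → ℝ // ∑ i, (v i) ^ 2 = 1}, (v : ι → ℝ) ⬝ᵥ (M *ᵥ (v : ι → ℝ))

section lamMin

variable {ι : Type} [Fintype ι]

theorem isCompact_setOf_sum_sq_eq_one : IsCompact {v : ι → ℝ | ∑ i, v i ^ 2 = 1} := by
  refine Metric.isCompact_of_isClosed_isBounded (isClosed_eq (by fun_prop) continuous_const) ?_
  refine (Metric.isBounded_closedBall (x := 0) (r := 1)).subset fun v hv => ?_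
  rw [mem_closedBall_zero_iff, pi_norm_le_iff_of_nonneg zero_le_one]
  intro i
  rw [Real.norm_eq_abs, ← sq_le_one_iff_abs_le_one]
  exact hv ▸ Finset.single_le_sum (fun j _ => sq_nonneg (v j)) (Finset.mem_univ i)

theorem bddBelow_range_rayleigh (M : Matrix ι ι ℝ) :
    BddBelow (Set.range fun w : {v : ι → ℝ // ∑ i, v i ^ 2 = 1} => (w : ι → ℝ) ⬝ᵥ (M *ᵥ w)) := by
  have := isCompact_setOf_sum_sq_eq_one.bddBelow_image
    (f := fun v : ι → ℝ => v ⬝ᵥ (M *ᵥ v)) (by fun_prop)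
  rwa [Set.image_eq_range] at this

theorem dotProduct_self_pos {v : ι → ℝ} (hv : v ≠ 0) : 0 < v ⬝ᵥ v :=
  dotProduct_self_star_pos_iff.2 hv

theorem lamMin_mul_dotProduct_self_le (M : Matrix ι ι ℝ) (w : ι → ℝ) :
    lamMin M * (w ⬝ᵥ w) ≤ w ⬝ᵥ (M *ᵥ w) := by
  rcases eq_or_ne w 0 with rfl | hw
  · simp
  set r := √(w ⬝ᵥ w)
  have hr : 0 < r := Real.sqrt_pos.2 (dotProduct_self_pos hw)
  have hrr : r * r = w ⬝ᵥ w := Real.mul_self_sqrt (dotProduct_self_pos hw).le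
  have hunit : ∑ i, (r⁻¹ • w) i ^ 2 = 1 := by
    simp only [Pi.smul_apply, smul_eq_mul, mul_pow, ← Finset.mul_sum]
    field_simp
    simpa [dotProduct, sq] using hrr.symm
  have hle := ciInf_le (bddBelow_range_rayleigh M) ⟨r⁻¹ • w, hunit⟩
  simp only [mulVec_smul, dotProduct_smul, smul_dotProduct, smul_eq_mul] at hle
  calc lamMin M * (w ⬝ᵥ w) ≤ r⁻¹ * (r⁻¹ * (w ⬝ᵥ (M *ᵥ w))) * (r * r) := by
        rw [hrr]; exact mul_le_mul_of_nonneg_right hle (dotProduct_self_pos hw).le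
    _ = w ⬝ᵥ (M *ᵥ w) := by field_simp

theorem le_lamMin [Nonempty ι] {M : Matrix ι ι ℝ} {c : ℝ}
    (h : ∀ w, c * (w ⬝ᵥ w) ≤ w ⬝ᵥ (M *ᵥ w)) : c ≤ lamMin M := by
  have : Nonempty {v : ι → ℝ // ∑ i, v i ^ 2 = 1} := by
    classical exact ⟨⟨Pi.single (Classical.arbitrary ι) 1, by simp [Pi.single_apply]⟩⟩
  refine le_ciInf fun ⟨w, hw⟩ => ?_
  have hww : w ⬝ᵥ w = 1 := by simpa [dotProduct, sq] using hw
  simpa [hww] using h w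

theorem lamMin_le_of_mulVec_eq_smul {M : Matrix ι ι ℝ} {v : ι → ℝ} {μ : ℝ} (hv : v ≠ 0)
    (h : M *ᵥ v = μ • v) : lamMin M ≤ μ := by
  have hle := lamMin_mul_dotProduct_self_le M v
  rw [h, dotProduct_smul, smul_eq_mul] at hle
  exact le_of_mul_le_mul_right hle (dotProduct_self_pos hv)

theorem sub_smul_vecMulVec_self_mulVec {M : Matrix ι ι ℝ} {v : ι → ℝ} {μ : ℝ} (c : ℝ)
    (h : M *ᵥ v = μ • v) :
    (M - c • vecMulVec v v) *ᵥ v = (μ - c * (v ⬝ᵥ v)) • v := by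
  rw [sub_mulVec, smul_mulVec, vecMulVec_mulVec, h, op_smul_eq_smul, sub_smul, mul_smul]

theorem dotProduct_sub_smul_vecMulVec_self_mulVec (M : Matrix ι ι ℝ) (v w : ι → ℝ) (c : ℝ) :
    w ⬝ᵥ ((M - c • vecMulVec v v) *ᵥ w) = w ⬝ᵥ (M *ᵥ w) - c * (v ⬝ᵥ w) ^ 2 := by
  rw [sub_mulVec, smul_mulVec, vecMulVec_mulVec, op_smul_eq_smul, dotProduct_sub,
    dotProduct_smul, dotProduct_smul, dotProduct_comm w v, smul_eq_mul, smul_eq_mul]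
  ring

theorem lamMin_sub_smul_vecMulVec_self {M : Matrix ι ι ℝ} {v : ι → ℝ} {c : ℝ} (hv : v ≠ 0)
    (hc : 0 ≤ c) (h : M *ᵥ v = lamMin M • v) :
    lamMin (M - c • vecMulVec v v) = lamMin M - c * (v ⬝ᵥ v) := by
  obtain ⟨i, -⟩ := Function.ne_iff.1 hv
  have : Nonempty ι := ⟨i⟩
  refine le_antisymm
    (lamMin_le_of_mulVec_eq_smul hv (sub_smul_vecMulVec_self_mulVec c h)) (le_lamMin fun w => ?_)
  have hM := lamMin_mul_dotProduct_self_le M w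
  have hCS : (v ⬝ᵥ w) ^ 2 ≤ (v ⬝ᵥ v) * (w ⬝ᵥ w) := by
    simpa only [dotProduct, sq] using Finset.sum_mul_sq_le_sq_mul_sq Finset.univ v w
  rw [dotProduct_sub_smul_vecMulVec_self_mulVec, sub_mul]
  linarith [mul_le_mul_of_nonneg_left hCS hc]

theorem sub_smul_vecMulVec_self_mulVec_eq_lamMin_smul {M : Matrix ι ι ℝ} {v : ι → ℝ} {c : ℝ}
    (hv : v ≠ 0) (hc : 0 ≤ c) (h : M *ᵥ v = lamMin M • v) :
    (M - c • vecMulVec v v) *ᵥ v = lamMin (M - c • vecMulVec v v) • v := by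
  rw [lamMin_sub_smul_vecMulVec_self hv hc h]
  exact sub_smul_vecMulVec_self_mulVec c h

end lamMin

theorem curvature_sharp_monotone_general {n : ℕ}
    (A : Matrix (Fin n) (Fin n) ℝ) (v : Fin n → ℝ) (hv : v ≠ 0)
    {N₁ : ℝ}
    (hsharp : (A - (2 / N₁) • vecMulVec v v) *ᵥ v
      = lamMin (A - (2 / N₁) • vecMulVec v v) • v) :
    ∀ N : ℝ, 0 < N → N ≤ N₁ →
      (A - (2 / N) • vecMulVec v v) *ᵥ v
        = lamMin (A - (2 / N) • vecMulVec v v) • v := by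
  intro N hN hNN₁
  have hc : 0 ≤ 2 / N - 2 / N₁ := sub_nonneg.2 (div_le_div_of_nonneg_left zero_le_two hN hNN₁)
  have hAN : A - (2 / N) • vecMulVec v v
      = A - (2 / N₁) • vecMulVec v v - (2 / N - 2 / N₁) • vecMulVec v v := by
    module
  rw [hAN]
  exact sub_smul_vecMulVec_self_mulVec_eq_lamMin_smul hv hc hsharp

/-- if `v` is a minimal eigenvector of `A_{N₁} = A - (2/N₁) v vᵀ`,
then it is a minimal eigenvector of `A_N = A - (2/N) v vᵀ` for all `N ∈ (0, N₁]`. -/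
theorem curvature_sharp_monotone {n : ℕ}
    (A : Matrix (Fin n) (Fin n) ℝ) (hA : A.IsSymm) (v : Fin n → ℝ) (hv : v ≠ 0)
    {N₁ : ℝ} (hN₁ : 0 < N₁)
    (hsharp : (A - (2 / N₁) • vecMulVec v v) *ᵥ v
      = lamMin (A - (2 / N₁) • vecMulVec v v) • v) :
    ∀ N : ℝ, 0 < N → N ≤ N₁ →
      (A - (2 / N) • vecMulVec v v) *ᵥ v
        = lamMin (A - (2 / N) • vecMulVec v v) • v :=
  curvature_sharp_monotone_general A v hv hsharp
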